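/- Let V : ℝ^d → ℝ be C² with V(u) = |u|²/2 for all |u| ≥ R (R > 0), let c ≥ 0, and let u : ℝ → ℝ^d be a global solution of ü = -c u̇ + ∇V(u) that converges to critical points of V at both ends of ℝ. Then sup_{ξ∈ℝ} |u(ξ)| < R. -/

import Mathlib

/-!
Outside the ball of radius `R` the equation reads `u'' = -c u' + u`, so at a point where
`q = ‖u‖²` is stationary and `‖u‖ ≥ R` we get `q'' = 2 (‖u‖² + ‖u'‖²) > 0`. Since all critical
points of `V` lie inside the ball, `q` tends to values below `R²` at both ends; if `‖u‖` ever
reached `R`, `q` would attain a global maximum outside the ball, where `q' = 0` and `q'' > 0`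
are incompatible. Hence `‖u‖ < R` everywhere, and the limits at `±∞` make the bound uniform.
-/

open Filter Topology Set Metric InnerProductSpace

local notation "⟪" x ", " y "⟫" => @inner ℝ _ _ x y

theorem not_isLocalMax_of_hasDerivAt_of_pos {f f' : ℝ → ℝ} {x₀ f'' : ℝ}
    (hf : ∀ x, HasDerivAt f (f' x) x) (hf' : HasDerivAt f' f'' x₀) (hd : f' x₀ = 0)
    (hpos : 0 < f'') : ¬IsLocalMax f x₀ := by
  intro hmax
  have hderiv : deriv f = f' := funext fun x => (hf x).deriv
  have hmin : IsLocalMin f x₀ :=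
    isLocalMin_of_deriv_deriv_pos (by rwa [hderiv, hf'.deriv]) (by rwa [hderiv])
      (hf x₀).continuousAt
  have hconst : f' =ᶠ[𝓝 x₀] fun _ => 0 := by
    have hflat : f =ᶠ[𝓝 x₀] fun _ => f x₀ :=
      (hmax.and hmin).mono fun x hx => le_antisymm hx.1 hx.2
    filter_upwards [hflat.eventuallyEq_nhds] with x hx
    rw [← (hf x).deriv, hx.deriv_eq, deriv_const]
  exact hpos.ne' (hf'.unique ((hasDerivAt_const x₀ (0 : ℝ)).congr_of_eventuallyEq hconst))

theorem Continuous.exists_forall_le_of_tendsto {f : ℝ → ℝ} (hf : Continuous f) {a b ξ₀ : ℝ}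
    (hbot : Tendsto f atBot (𝓝 a)) (htop : Tendsto f atTop (𝓝 b))
    (ha : a < f ξ₀) (hb : b < f ξ₀) : ∃ m, ∀ ξ, f ξ ≤ f m := by
  refine hf.exists_forall_ge' ξ₀ ?_
  rw [cocompact_eq_atBot_atTop, eventually_sup]
  exact ⟨(hbot.eventually_lt_const ha).mono fun _ => le_of_lt,
    (htop.eventually_lt_const hb).mono fun _ => le_of_lt⟩

theorem sSup_range_lt_of_tendsto {f : ℝ → ℝ} (hf : Continuous f) {a b R : ℝ}
    (hbot : Tendsto f atBot (𝓝 a)) (htop : Tendsto f atTop (𝓝 b))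
    (ha : a < R) (hb : b < R) (hlt : ∀ ξ, f ξ < R) : sSup (range f) < R := by
  obtain ⟨r, hr, hrR⟩ := exists_between (max_lt ha hb)
  by_cases hexceed : ∃ ξ₀, r < f ξ₀
  · obtain ⟨ξ₀, hξ₀⟩ := hexceed
    obtain ⟨m, hm⟩ := hf.exists_forall_le_of_tendsto hbot htop
      ((le_max_left a b).trans_lt (hr.trans hξ₀)) ((le_max_right a b).trans_lt (hr.trans hξ₀))
    rw [(show IsGreatest (range f) (f m) from ⟨mem_range_self m, forall_mem_range.2 hm⟩).csSup_eq]
    exact hlt m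
  · push Not at hexceed
    exact (csSup_le (range_nonempty f) (forall_mem_range.2 hexceed)).trans_lt hrR

section Gradient

variable {F : Type*} [NormedAddCommGroup F] [InnerProductSpace ℝ F] [CompleteSpace F]

theorem hasGradientAt_norm_sq_div_two (x : F) :
    HasGradientAt (fun y : F => ‖y‖ ^ 2 / 2) x x := by
  rw [hasGradientAt_iff_hasFDerivAt]
  simp_rw [div_eq_mul_inv]
  refine ((hasStrictFDerivAt_norm_sq x).hasFDerivAt.mul_const 2⁻¹).congr_fderiv ?_
  ext y
  simp [toDual_apply_apply]

theorem ContDiff.continuous_gradient {V : F → ℝ} (hV : ContDiff ℝ 1 V) :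
    Continuous (gradient V) :=
  (toDual ℝ F).symm.continuous.comp (hV.continuous_fderiv one_ne_zero)

/-- On the sphere itself `V` need not agree with `‖x‖² / 2` on a neighbourhood; there the
identity follows from the continuity of `∇V`, the sphere lying in the closure of the exterior. -/
theorem gradient_eq_self_of_le_norm {V : F → ℝ} (hV : Continuous (gradient V)) {R : ℝ}
    (hR : R ≠ 0) (hquad : ∀ x : F, R ≤ ‖x‖ → V x = ‖x‖ ^ 2 / 2) {x : F} (hx : R ≤ ‖x‖) :
    gradient V x = x := by
  have houter : (closedBall (0 : F) R)ᶜ ⊆ {y | gradient V y = y} := fun y hy => by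
    have hV_eq : V =ᶠ[𝓝 y] fun z => ‖z‖ ^ 2 / 2 :=
      eventually_of_mem (isClosed_closedBall.isOpen_compl.mem_nhds hy) fun z hz =>
        hquad z (le_of_lt (not_le.mp (by simpa using hz)))
    exact hV_eq.gradient_eq.trans (hasGradientAt_norm_sq_div_two y).gradient
  have hclosure := closure_minimal houter (isClosed_eq hV continuous_id)
  rw [closure_compl, interior_closedBall _ hR] at hclosure
  exact hclosure (by simpa using hx)

end Gradient

theorem norm_lt_of_tendsto_of_eq_self_of_le_norm {E : Type*} [NormedAddCommGroup E]
    [InnerProductSpace ℝ E] {F : E → E} {R c : ℝ} (hR : 0 < R)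
    (hF : ∀ x, R ≤ ‖x‖ → F x = x) {u du : ℝ → E}
    (hu : ∀ ξ, HasDerivAt u (du ξ) ξ) (hdu : ∀ ξ, HasDerivAt du (-c • du ξ + F (u ξ)) ξ)
    {a b : ℝ} (hbot : Tendsto (fun ξ => ‖u ξ‖) atBot (𝓝 a))
    (htop : Tendsto (fun ξ => ‖u ξ‖) atTop (𝓝 b)) (ha : a < R) (hb : b < R) (ξ₀ : ℝ) :
    ‖u ξ₀‖ < R := by
  by_contra! hξ₀
  have hcont : Continuous fun ξ => ‖u ξ‖ :=
    (continuous_iff_continuousAt.2 fun ξ => (hu ξ).continuousAt).norm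
  obtain ⟨m, hm⟩ := hcont.exists_forall_le_of_tendsto hbot htop
    (ha.trans_le hξ₀) (hb.trans_le hξ₀)
  have hRm : R ≤ ‖u m‖ := hξ₀.trans (hm ξ₀)
  have hmax : IsLocalMax (fun ξ => ‖u ξ‖ ^ 2) m :=
    Eventually.of_forall fun ξ => pow_le_pow_left₀ (norm_nonneg _) (hm ξ) 2
  have hcrit : ⟪u m, du m⟫ = 0 := by
    linarith [hmax.hasDerivAt_eq_zero (hu m).norm_sq]
  -- the damping term drops out because `⟪u, u'⟫ = 0` at the maximum
  have hsecond : HasDerivAt (fun ξ => 2 * ⟪u ξ, du ξ⟫) (2 * (‖u m‖ ^ 2 + ‖du m‖ ^ 2)) m := by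
    refine (((hu m).inner ℝ (hdu m)).const_mul 2).congr_deriv ?_
    rw [hF _ hRm, inner_add_right, inner_smul_right, hcrit, real_inner_self_eq_norm_sq,
      real_inner_self_eq_norm_sq]
    ring
  exact not_isLocalMax_of_hasDerivAt_of_pos (fun ξ => (hu ξ).norm_sq) hsecond (by simp [hcrit])
    (mul_pos two_pos (add_pos_of_pos_of_nonneg (pow_pos (hR.trans_le hRm) 2) (sq_nonneg _)))
    hmax

theorem a_priori_bound_on_profiles_general {d : ℕ}
    (V : EuclideanSpace ℝ (Fin d) → ℝ) (hV : ContDiff ℝ 2 V)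
    (R : ℝ) (hR : 0 < R)
    (hquad : ∀ x : EuclideanSpace ℝ (Fin d), R ≤ ‖x‖ → V x = ‖x‖ ^ 2 / 2)
    (c : ℝ) (u du : ℝ → EuclideanSpace ℝ (Fin d))
    (hu : ∀ ξ, HasDerivAt u (du ξ) ξ)
    (hdu : ∀ ξ, HasDerivAt du (-c • du ξ + gradient V (u ξ)) ξ)
    (eminus eplus : EuclideanSpace ℝ (Fin d))
    (heMinus : gradient V eminus = 0) (hePlus : gradient V eplus = 0)
    (huBot : Tendsto u atBot (nhds eminus)) (huTop : Tendsto u atTop (nhds eplus)) :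
    sSup (Set.range fun ξ : ℝ => ‖u ξ‖) < R := by
  have hgrad : ∀ x, R ≤ ‖x‖ → gradient V x = x := fun _ =>
    gradient_eq_self_of_le_norm (hV.of_le one_le_two).continuous_gradient hR.ne' hquad
  have hcrit : ∀ e, gradient V e = 0 → ‖e‖ < R := fun e he => by
    by_contra! hRe
    have he0 : e = 0 := (hgrad e hRe).symm.trans he
    exact hR.not_ge (by simpa [he0] using hRe)
  have hminus := hcrit eminus heMinus
  have hplus := hcrit eplus hePlus
  exact sSup_range_lt_of_tendsto
    (continuous_iff_continuousAt.2 fun ξ => (hu ξ).continuousAt).norm huBot.norm huTop.norm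
    hminus hplus
    (norm_lt_of_tendsto_of_eq_self_of_le_norm hR hgrad hu hdu huBot.norm huTop.norm hminus hplus)

theorem a_priori_bound_on_profiles {d : ℕ}
    (V : EuclideanSpace ℝ (Fin d) → ℝ) (hV : ContDiff ℝ 2 V)
    (R : ℝ) (hR : 0 < R)
    (hquad : ∀ x : EuclideanSpace ℝ (Fin d), R ≤ ‖x‖ → V x = ‖x‖ ^ 2 / 2)
    (c : ℝ) (hc : 0 ≤ c) (u du : ℝ → EuclideanSpace ℝ (Fin d))
    (hu : ∀ ξ, HasDerivAt u (du ξ) ξ)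
    (hdu : ∀ ξ, HasDerivAt du (-c • du ξ + gradient V (u ξ)) ξ)
    (eminus eplus : EuclideanSpace ℝ (Fin d))
    (heMinus : gradient V eminus = 0) (hePlus : gradient V eplus = 0)
    (huBot : Tendsto u atBot (nhds eminus)) (huTop : Tendsto u atTop (nhds eplus)) :
    sSup (Set.range fun ξ : ℝ => ‖u ξ‖) < R :=
  a_priori_bound_on_profiles_general V hV R hR hquad c u du hu hdu eminus eplus heMinus hePlus huBot
    huTop
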